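/- arXiv:0911.1682 — 3 statements merged into one kernel-verified Lean document; each statement's English description precedes it below -/
import Mathlib

section
/- Suppose that for every 1 ≤ r ≤ k − 1 and every g ∈ 𝓕, ‖𝔼(g(X_{r+1}) | 𝓜_1) − 𝔼 g(X_{r+1})‖_∞ ≤ δ_r (essential supremum norm). Then for f ∈ 𝓕 with 𝔼 f(X_1) = 0 and all 1 ≤ k ≤ n, σ_k²(f) ≤ σ_1²(f) + 2 𝔼|f(X_1)| Σ_{r=1}^{k−1} δ_r. -/
/-!
Expanding the variance of the partial sum gives `Var S_k = ∑_{i,j ≤ k} cov(f(X_i), f(X_j))`,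
and by stationarity `cov(f(X_i), f(X_j)) = γ |i - j|` with `γ r = cov(f(X_1), f(X_{r+1}))`.
Since `f(X_1)` is `𝓜_1`-measurable, `γ r = 𝔼[f(X_1) (𝔼(f(X_{r+1}) | 𝓜_1) - 𝔼 f(X_{r+1}))]`,
so `|γ r| ≤ δ_r 𝔼|f(X_1)|`. In each row `i` of the double sum every lag `r ≥ 1` occurs at most
twice, which bounds the row by `γ 0 + 2 𝔼|f(X_1)| ∑_{r < k} δ_r`.
-/

open MeasureTheory ProbabilityTheory Finset

namespace Finset

lemma sum_comp_le_sum_of_injOn {ι κ M : Type*} [AddCommMonoid M] [PartialOrder M]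
    [IsOrderedAddMonoid M] {s : Finset ι} {t : Finset κ} {e : ι → κ} {b : κ → M}
    (hb : ∀ r ∈ t, 0 ≤ b r) (he : Set.InjOn e s) (hest : Set.MapsTo e s t) :
    ∑ j ∈ s, b (e j) ≤ ∑ r ∈ t, b r := by
  classical
  rw [← sum_image he]
  exact sum_le_sum_of_subset_of_nonneg (image_subset_iff.2 hest) fun r hr _ => hb r hr

lemma sum_erase_Icc_dist_le {b : ℕ → ℝ} (hb : ∀ r, 0 ≤ b r) {k i : ℕ} (hi : i ∈ Icc 1 k) :
    ∑ j ∈ (Icc 1 k).erase i, b (Nat.dist i j) ≤ 2 * ∑ r ∈ Icc 1 (k - 1), b r := by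
  rw [← sum_filter_add_sum_filter_not _ (· < i), two_mul]
  rw [mem_Icc] at hi
  gcongr <;> refine sum_comp_le_sum_of_injOn (fun r _ => hb r) ?_ ?_ <;>
    simp only [Set.InjOn, Set.MapsTo, coe_filter, mem_erase, mem_Icc, coe_Icc, Set.mem_Icc,
      Set.mem_ofPred_eq, Nat.dist] <;> omega

theorem sum_Icc_sum_Icc_dist_le {γ b : ℕ → ℝ} {k : ℕ} (hb : ∀ r, 0 ≤ b r)
    (hγb : ∀ r ∈ Icc 1 (k - 1), γ r ≤ b r) :
    ∑ i ∈ Icc 1 k, ∑ j ∈ Icc 1 k, γ (Nat.dist i j)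
      ≤ k * (γ 0 + 2 * ∑ r ∈ Icc 1 (k - 1), b r) := by
  have row (i) (hi : i ∈ Icc 1 k) :
      ∑ j ∈ Icc 1 k, γ (Nat.dist i j) ≤ γ 0 + 2 * ∑ r ∈ Icc 1 (k - 1), b r := by
    rw [← add_sum_erase _ _ hi, Nat.dist_self]
    gcongr
    calc ∑ j ∈ (Icc 1 k).erase i, γ (Nat.dist i j)
        ≤ ∑ j ∈ (Icc 1 k).erase i, b (Nat.dist i j) := by
          refine sum_le_sum fun j hj => hγb _ ?_
          simp only [mem_erase, mem_Icc, Nat.dist] at hi hj ⊢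
          omega
      _ ≤ _ := sum_erase_Icc_dist_le hb hi
  calc _ ≤ ∑ _i ∈ Icc 1 k, (γ 0 + 2 * ∑ r ∈ Icc 1 (k - 1), b r) := sum_le_sum row
    _ = _ := by simp [mul_add]

end Finset

section Stationary

variable {Ω 𝒳 : Type*} [MeasurableSpace Ω] [MeasurableSpace 𝒳] {P : Measure Ω}
  {X : ℕ → Ω → 𝒳}

lemma map_prodMk_eq_of_stationary (hX : ∀ t, Measurable (X t))
    (hstat : ∀ m k : ℕ, P.map (fun ω (i : Fin m) => X (1 + k + i) ω)
      = P.map (fun ω (i : Fin m) => X (1 + i) ω))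
    {i j : ℕ} (hi : 1 ≤ i) (hij : i ≤ j) :
    P.map (fun ω => (X i ω, X j ω)) = P.map (fun ω => (X 1 ω, X (j - i + 1) ω)) := by
  let ends : (Fin (j - i + 1) → 𝒳) → 𝒳 × 𝒳 := fun v => (v 0, v (Fin.last _))
  have hends : Measurable ends := (measurable_pi_apply _).prodMk (measurable_pi_apply _)
  have hwindow (s : ℕ) : Measurable fun ω (a : Fin (j - i + 1)) => X (s + a) ω :=
    measurable_pi_lambda _ fun _ => hX _
  have hij_ends : (fun ω => (X i ω, X j ω))
      = ends ∘ fun ω (a : Fin (j - i + 1)) => X (1 + (i - 1) + a) ω := by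
    ext ω <;> simp only [ends, Function.comp_apply, Fin.val_zero, Fin.val_last] <;> congr 1
    all_goals omega
  have h1_ends : (fun ω => (X 1 ω, X (j - i + 1) ω))
      = ends ∘ fun ω (a : Fin (j - i + 1)) => X (1 + a) ω := by
    ext ω <;> simp [ends, add_comm]
  rw [hij_ends, h1_ends, ← Measure.map_map hends (hwindow _), hstat,
    Measure.map_map hends (hwindow _)]

lemma covariance_comp_eq_of_stationary (hX : ∀ t, Measurable (X t))
    (hstat : ∀ m k : ℕ, P.map (fun ω (i : Fin m) => X (1 + k + i) ω)
      = P.map (fun ω (i : Fin m) => X (1 + i) ω))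
    {φ : 𝒳 → ℝ} (hφ : Measurable φ) {i j : ℕ} (hi : 1 ≤ i) (hj : 1 ≤ j) :
    cov[fun ω => φ (X i ω), fun ω => φ (X j ω); P]
      = cov[fun ω => φ (X 1 ω), fun ω => φ (X (Nat.dist i j + 1) ω); P] := by
  wlog hij : i ≤ j generalizing i j
  · rw [covariance_comm, Nat.dist_comm]
    exact this hj hi (by omega)
  have hcov (a b : ℕ) : cov[fun ω => φ (X a ω), fun ω => φ (X b ω); P]
      = cov[φ ∘ Prod.fst, φ ∘ Prod.snd; P.map fun ω => (X a ω, X b ω)] :=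
    (covariance_map_fun (hφ.comp measurable_fst).aestronglyMeasurable
      (hφ.comp measurable_snd).aestronglyMeasurable
      ((hX a).prodMk (hX b)).aemeasurable).symm
  rw [hcov, hcov, map_prodMk_eq_of_stationary hX hstat hi hij, Nat.dist_eq_sub_of_le hij]

end Stationary

lemma abs_covariance_le_of_abs_condExp_sub_le {Ω : Type*} {m mΩ : MeasurableSpace Ω}
    {μ : Measure Ω} [IsProbabilityMeasure μ] (hm : m ≤ mΩ) {Y Z : Ω → ℝ} {c δ : ℝ}
    (hY : StronglyMeasurable[m] Y) (hYc : ∀ᵐ ω ∂μ, ‖Y ω‖ ≤ c) (hZ : MemLp Z 2 μ)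
    (hZδ : ∀ᵐ ω ∂μ, |μ[Z|m] ω - μ[Z]| ≤ δ) :
    |cov[Y, Z; μ]| ≤ (∫ ω, |Y ω| ∂μ) * δ := by
  have hY2 : MemLp Y 2 μ := MemLp.of_bound (hY.mono hm).aestronglyMeasurable c hYc
  have hYcondExp : Integrable (Y * μ[Z|m]) μ :=
    integrable_condExp.bdd_mul (hY.mono hm).aestronglyMeasurable hYc
  have hpull : μ[Y * Z] = μ[Y * μ[Z|m]] :=
    (integral_condExp hm).symm.trans <| integral_congr_ae <|
      condExp_stronglyMeasurable_mul_of_bound hm hY (hZ.integrable one_le_two) c hYc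
  have hYZ : Integrable (fun ω => Y ω * (μ[Z|m] ω - μ[Z])) μ := by
    simp_rw [mul_sub]
    exact hYcondExp.sub ((hY2.integrable one_le_two).mul_const _)
  have hcov : cov[Y, Z; μ] = ∫ ω, Y ω * (μ[Z|m] ω - μ[Z]) ∂μ := by
    simp_rw [mul_sub]
    rw [covariance_eq_sub hY2 hZ, hpull, ← integral_mul_const,
      ← integral_sub hYcondExp ((hY2.integrable one_le_two).mul_const _)]
    rfl
  rw [hcov, ← integral_mul_const]
  refine abs_integral_le_integral_abs.trans <|
    integral_mono_ae hYZ.abs ((hY2.integrable one_le_two).abs.mul_const δ) ?_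
  filter_upwards [hZδ] with ω hω
  rw [abs_mul]
  exact mul_le_mul_of_nonneg_left hω (abs_nonneg _)

theorem variance_term_estimate_general
    {Ω : Type*} [MeasurableSpace Ω] (P : Measure Ω) [IsProbabilityMeasure P]
    {𝒳 : Type*} [MetricSpace 𝒳] [MeasurableSpace 𝒳] [BorelSpace 𝒳]
    (X : ℕ → Ω → 𝒳) (hXmeas : ∀ t, Measurable (X t))
    -- strict stationarity: the law of (X_{1+k},…,X_{m+k}) equals the law of (X_1,…,X_m)
    (hstat : ∀ m k : ℕ,
      Measure.map (fun ω => fun i : Fin m => X (1 + k + i) ω) P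
        = Measure.map (fun ω => fun i : Fin m => X (1 + i) ω) P)
    -- (δ_r) nonincreasing, nonnegative
    (δ : ℕ → ℝ) (hδ_nonneg : ∀ r, 0 ≤ δ r)
    (k : ℕ)
    -- the dependence assumption: for all 1 ≤ r ≤ k−1 and all g ∈ 𝓕
    (hdep : ∀ r : ℕ, 1 ≤ r → r ≤ k - 1 →
      ∀ g : 𝒳 → ℝ, LipschitzWith 1 g → (∀ y, |g y| ≤ 1 / 2) →
        ∀ᵐ ω ∂P,
          |(P[(fun ω' => g (X (r + 1) ω')) | MeasurableSpace.comap (X 1) inferInstance]) ω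
            - ∫ ω', g (X (r + 1) ω') ∂P| ≤ δ r)
    -- f ∈ 𝓕
    (f : 𝒳 → ℝ) (hf_lip : LipschitzWith 1 f) (hf_bdd : ∀ y, |f y| ≤ 1 / 2) :
    (k : ℝ)⁻¹ * variance (fun ω => ∑ i ∈ Finset.Icc 1 k, f (X i ω)) P
      ≤ variance (fun ω => f (X 1 ω)) P
        + 2 * (∫ ω, |f (X 1 ω)| ∂P) * ∑ r ∈ Finset.Icc 1 (k - 1), δ r := by
  set D := ∫ ω, |f (X 1 ω)| ∂P
  have hf : Measurable f := hf_lip.continuous.measurable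
  have hfX_bdd (i : ℕ) : ∀ᵐ ω ∂P, ‖f (X i ω)‖ ≤ 1 / 2 := ae_of_all _ fun _ => hf_bdd _
  have hfX (i : ℕ) : MemLp (fun ω => f (X i ω)) 2 P :=
    MemLp.of_bound (hf.comp (hXmeas i)).aestronglyMeasurable _ (hfX_bdd i)
  have hD_δ (r : ℕ) : 0 ≤ D * δ r :=
    mul_nonneg (integral_nonneg fun _ => abs_nonneg _) (hδ_nonneg r)
  have hcov_le (r : ℕ) (hr : r ∈ Icc 1 (k - 1)) :
      cov[fun ω => f (X 1 ω), fun ω => f (X (r + 1) ω); P] ≤ D * δ r := by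
    rw [mem_Icc] at hr
    exact (le_abs_self _).trans <| abs_covariance_le_of_abs_condExp_sub_le
      (hXmeas 1).comap_le (hf.comp (comap_measurable (X 1))).stronglyMeasurable (hfX_bdd 1)
      (hfX _) (hdep r hr.1 hr.2 f hf_lip hf_bdd)
  have hvar : variance (fun ω => ∑ i ∈ Icc 1 k, f (X i ω)) P
      ≤ k * (variance (fun ω => f (X 1 ω)) P + 2 * ∑ r ∈ Icc 1 (k - 1), D * δ r) := by
    rw [variance_fun_sum' fun i _ => hfX i, ← covariance_self (hfX 1).aemeasurable]
    calc _ = ∑ i ∈ Icc 1 k, ∑ j ∈ Icc 1 k,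
          cov[fun ω => f (X 1 ω), fun ω => f (X (Nat.dist i j + 1) ω); P] :=
          sum_congr rfl fun i hi => sum_congr rfl fun j hj =>
            covariance_comp_eq_of_stationary hXmeas hstat hf (mem_Icc.1 hi).1 (mem_Icc.1 hj).1
      _ ≤ _ := sum_Icc_sum_Icc_dist_le hD_δ hcov_le
  rw [mul_assoc, mul_sum]
  refine inv_mul_le_of_le_mul₀ k.cast_nonneg (add_nonneg (variance_nonneg _ _) ?_) hvar
  exact mul_nonneg zero_le_two <| sum_nonneg fun r _ => hD_δ r

/-- **Proposition 3.2 (estimate of the variance terms).**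
If `‖𝔼(g(X_{r+1}) | 𝓜_1) − 𝔼 g(X_{r+1})‖_∞ ≤ δ_r` for all `1 ≤ r ≤ k − 1` and all `g ∈ 𝓕`,
then `σ_k²(f) ≤ σ_1²(f) + 2 𝔼|f(X_1)| Σ_{r=1}^{k−1} δ_r`. -/
theorem variance_term_estimate
    {Ω : Type*} [MeasurableSpace Ω] (P : Measure Ω) [IsProbabilityMeasure P]
    {𝒳 : Type*} [MetricSpace 𝒳] [MeasurableSpace 𝒳] [BorelSpace 𝒳]
    (X : ℕ → Ω → 𝒳) (hXmeas : ∀ t, Measurable (X t))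
    -- strict stationarity: the law of (X_{1+k},…,X_{m+k}) equals the law of (X_1,…,X_m)
    (hstat : ∀ m k : ℕ,
      Measure.map (fun ω => fun i : Fin m => X (1 + k + i) ω) P
        = Measure.map (fun ω => fun i : Fin m => X (1 + i) ω) P)
    (n : ℕ) (hn : 1 ≤ n)
    -- (δ_r) nonincreasing, nonnegative
    (δ : ℕ → ℝ) (hδ_nonneg : ∀ r, 0 ≤ δ r) (hδ_mono : ∀ r s : ℕ, 1 ≤ r → r ≤ s → δ s ≤ δ r)
    (k : ℕ) (hk1 : 1 ≤ k) (hkn : k ≤ n)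
    -- the dependence assumption: for all 1 ≤ r ≤ k−1 and all g ∈ 𝓕
    (hdep : ∀ r : ℕ, 1 ≤ r → r ≤ k - 1 →
      ∀ g : 𝒳 → ℝ, LipschitzWith 1 g → (∀ y, |g y| ≤ 1 / 2) →
        ∀ᵐ ω ∂P,
          |(P[(fun ω' => g (X (r + 1) ω')) | MeasurableSpace.comap (X 1) inferInstance]) ω
            - ∫ ω', g (X (r + 1) ω') ∂P| ≤ δ r)
    -- f ∈ 𝓕
    (f : 𝒳 → ℝ) (hf_lip : LipschitzWith 1 f) (hf_bdd : ∀ y, |f y| ≤ 1 / 2)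
    (hf_mean : ∫ ω, f (X 1 ω) ∂P = 0) :
    (k : ℝ)⁻¹ * variance (fun ω => ∑ i ∈ Finset.Icc 1 k, f (X i ω)) P
      ≤ variance (fun ω => f (X 1 ω)) P
        + 2 * (∫ ω, |f (X 1 ω)| ∂P) * ∑ r ∈ Finset.Icc 1 (k - 1), δ r :=
  variance_term_estimate_general P X hXmeas hstat δ hδ_nonneg k hdep f hf_lip hf_bdd
end

section
/- Let Z be a real-valued random variable and let v > 0 and b ≥ 1 be such that ln 𝔼[ exp(t Z) ] ≤ v t² for all 0 ≤ t ≤ 1/b. Then for every x ≥ 0, ℙ( Z ≥ 2 √(v x) + 1.5 b x ) ≤ e^{−x}. -/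
open MeasureTheory ProbabilityTheory Real
open scoped ENNReal

/-! Markov's inequality for `exp (t Z)` bounds `ℙ(Z ≥ a)` by `exp (v t² - t a)` for every
`t ∈ [0, 1/b]`. The unconstrained optimum `t = √(x/v)` gives the Gaussian term; when it exceeds
`1/b` it is truncated there, and the linear term `1.5 b x` pays for the truncation. -/

/-- If `t = √(x/v)` then `t √(vx) = x`; otherwise `b t = 1` and the linear term alone exceeds `x`.
In both cases `v t² ≤ t √(vx)` because `t ≤ √(x/v)`. -/
lemma chernoff_exponent_le {v b x : ℝ} (hv : 0 < v) (hb : 0 < b) (hx : 0 ≤ x) :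
    let t := min √(x / v) (1 / b)
    v * t ^ 2 - t * (2 * √(v * x) + 1.5 * b * x) ≤ -x := by
  intro t
  have ht0 : 0 ≤ t := le_min (sqrt_nonneg _) (by positivity)
  have hvs : v * √(x / v) = √(v * x) := by
    rw [show v * x = v ^ 2 * (x / v) by field_simp, sqrt_mul (sq_nonneg v), sqrt_sq hv.le]
  have hquad : v * t ^ 2 ≤ t * √(v * x) :=
    calc v * t ^ 2 = v * t * t := by ring
      _ ≤ v * t * √(x / v) := by gcongr; exact min_le_left _ _
      _ = t * √(v * x) := by rw [← hvs]; ring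
  have hlin : x ≤ t * √(v * x) + 1.5 * b * x * t := by
    rcases min_choice √(x / v) (1 / b) with h | h <;> simp only [t, h]
    · rw [← hvs, mul_left_comm, mul_self_sqrt (by positivity), mul_div_cancel₀ _ hv.ne']
      have : 0 ≤ 1.5 * b * x * √(x / v) := by positivity
      linarith
    · rw [show 1.5 * b * x * (1 / b) = 1.5 * x by field_simp]
      nlinarith [sqrt_nonneg (v * x)]
  nlinarith

lemma measure_ge_le_exp_of_log_mgf_le {Ω : Type*} [MeasurableSpace Ω] {μ : Measure Ω}
    [IsFiniteMeasure μ] [NeZero μ] {X : Ω → ℝ} {t c : ℝ} (a : ℝ) (ht : 0 ≤ t)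
    (h_int : Integrable (fun ω => exp (t * X ω)) μ) (h_log : log (mgf X μ t) ≤ c) :
    μ {ω | a ≤ X ω} ≤ ENNReal.ofReal (exp (c - t * a)) := by
  have h_mgf : mgf X μ t ≤ exp c :=
    (log_le_iff_le_exp (mgf_pos' (NeZero.ne μ) h_int)).1 h_log
  rw [← ofReal_measureReal]
  refine ENNReal.ofReal_le_ofReal ?_
  calc μ.real {ω | a ≤ X ω} ≤ exp (-t * a) * mgf X μ t := measure_ge_le_exp_mul_mgf a ht h_int
    _ ≤ exp (-t * a) * exp c := by gcongr
    _ = exp (c - t * a) := by rw [← exp_add]; ring_nf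

theorem chernoff_subgaussian_on_interval_general
    {Ω : Type*} [MeasurableSpace Ω] (P : Measure Ω) [IsProbabilityMeasure P]
    (Z : Ω → ℝ)
    (v b : ℝ) (hv : 0 < v) (hb : 1 ≤ b)
    (hint : ∀ t : ℝ, 0 ≤ t → t ≤ 1 / b → Integrable (fun ω => Real.exp (t * Z ω)) P)
    (hlog : ∀ t : ℝ, 0 ≤ t → t ≤ 1 / b →
      Real.log (∫ ω, Real.exp (t * Z ω) ∂P) ≤ v * t ^ 2)
    (x : ℝ) (hx : 0 ≤ x) :
    P {ω | 2 * Real.sqrt (v * x) + 1.5 * b * x ≤ Z ω}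
      ≤ ENNReal.ofReal (Real.exp (-x)) := by
  have hb0 : 0 < b := one_pos.trans_le hb
  set t := min √(x / v) (1 / b)
  have ht0 : 0 ≤ t := le_min (sqrt_nonneg _) (by positivity)
  have ht1 : t ≤ 1 / b := min_le_right _ _
  calc P {ω | 2 * √(v * x) + 1.5 * b * x ≤ Z ω}
      ≤ ENNReal.ofReal (exp (v * t ^ 2 - t * (2 * √(v * x) + 1.5 * b * x))) :=
        measure_ge_le_exp_of_log_mgf_le _ ht0 (hint t ht0 ht1) (hlog t ht0 ht1)
    _ ≤ ENNReal.ofReal (exp (-x)) := by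
        gcongr
        exact chernoff_exponent_le hv hb0 hx

/-- **Chernoff-device step.**
If `log 𝔼 exp(t Z) ≤ v t²` for all `0 ≤ t ≤ 1/b`, with `v > 0` and `b ≥ 1`, then for every
`x ≥ 0`, `ℙ(Z ≥ 2 √(v x) + 1.5 b x) ≤ e^{−x}`. -/
theorem chernoff_subgaussian_on_interval
    {Ω : Type*} [MeasurableSpace Ω] (P : Measure Ω) [IsProbabilityMeasure P]
    (Z : Ω → ℝ) (hZ : Measurable Z)
    (v b : ℝ) (hv : 0 < v) (hb : 1 ≤ b)
    (hint : ∀ t : ℝ, 0 ≤ t → t ≤ 1 / b → Integrable (fun ω => Real.exp (t * Z ω)) P)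
    (hlog : ∀ t : ℝ, 0 ≤ t → t ≤ 1 / b →
      Real.log (∫ ω, Real.exp (t * Z ω) ∂P) ≤ v * t ^ 2)
    (x : ℝ) (hx : 0 ≤ x) :
    P {ω | 2 * Real.sqrt (v * x) + 1.5 * b * x ≤ Z ω}
      ≤ ENNReal.ofReal (Real.exp (-x)) :=
  chernoff_subgaussian_on_interval_general P Z v b hv hb hint hlog x hx
end

section
/- Let (ξ_t)_{t∈ℤ} be an i.i.d. sequence in a metric space (𝒴, ρ), suppose there exist y₀ ∈ 𝒴 and B > 0 with ρ(ξ_1, y₀) ≤ B/2 almost surely, and let H : 𝒴^{ℕ∖{0}} → 𝒳 satisfy d( H((x_i)_{i≥1}), H((y_i)_{i≥1}) ) ≤ Σ_{i≥1} a_i ρ(x_i, y_i) with a_i ≥ 0 and Σ_{i≥1} a_i < ∞. Define X_t = H( (ξ_{t−i+1})_{i≥1} ). Then (X_t) is strictly stationary and for every n ≥ 1 the sample (X_1,…,X_n) satisfies condition (cl) with δ'_r = B Σ_{i≥r} a_i: namely, for all r ≥ 1 and all 1 ≤ j ≤ n − 2r + 1, the vector (X*_i)_{r+j ≤ i ≤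 2r+j−1} defined by X*_i = H( (η_{i−ℓ+1})_{ℓ≥1} ), where η_s = ξ_s for s > j and η_s = ξ'_s for s ≤ j for an independent copy (ξ'_t) of (ξ_t), has the same joint law as (X_i)_{r+j ≤ i ≤ 2r+j−1}, is independent of 𝓜_j = σ(X_t : 1 ≤ t ≤ j), and satisfies Σ_{i=r+j}^{2r+j−1} d(X_i, X*_i) ≤ r B Σ_{i≥r} a_i almost surely. -/
/-!
All laws in the statement are images of the product measure `ν^ℤ`, `ν` the law of `ξ 0`. The
innovations `ξ` and their copy `ξ'` together form one i.i.d. family indexed by `ℤ ⊕ ℤ`, so every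
injectively reindexed subfamily of it, such as the shifted process `(ξ (t + k))_t` or the spliced
process `η` (equal to `ξ` after time `j` and to `ξ'` up to time `j`), has law `ν^ℤ`. A window of
`X` or of `X*` is one fixed measurable function of such a subfamily, which gives stationarity and
the equality in law. `X*` only reads `ξ_s` for `s > j` and `ξ'`, while `X_1, …, X_j` only read
`ξ_s` for `s ≤ j`: disjoint blocks of the family, hence independence. Finally, for `i ≥ r + j`,
`X_i` and `X*_i` differ only in the coordinates of lag `l ≥ r`, each at distance at most `B`.
-/

open MeasureTheory ProbabilityTheory

namespace MeasureTheory.Measure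

lemma map_sumPiEquivProdPi_symm_prod_infinitePi {ι κ : Type*} {X : ι ⊕ κ → Type*}
    [∀ i, MeasurableSpace (X i)] (μ : (i : ι ⊕ κ) → Measure (X i))
    [∀ i, IsProbabilityMeasure (μ i)] :
    ((infinitePi fun i ↦ μ (.inl i)).prod (infinitePi fun k ↦ μ (.inr k))).map
      (MeasurableEquiv.sumPiEquivProdPi X).symm = infinitePi μ := by
  refine eq_infinitePi μ fun s t ht ↦ ?_
  have hpre : (MeasurableEquiv.sumPiEquivProdPi X).symm ⁻¹' (s : Set (ι ⊕ κ)).pi t =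
      (s.toLeft : Set ι).pi (fun i ↦ t (.inl i)) ×ˢ
        (s.toRight : Set κ).pi (fun k ↦ t (.inr k)) := by
    ext ⟨f, g⟩
    simp [MeasurableEquiv.sumPiEquivProdPi, Equiv.sumPiEquivProdPi, Sum.forall]
  rw [map_apply (MeasurableEquiv.measurable _) (.pi s.countable_toSet fun i _ ↦ ht i), hpre,
    prod_prod, infinitePi_pi _ fun i _ ↦ ht _, infinitePi_pi _ fun i _ ↦ ht _,
    Finset.prod_sum_eq_prod_toLeft_mul_prod_toRight]

end MeasureTheory.Measure

namespace ProbabilityTheory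

variable {Ω ι κ β : Type*} {mΩ : MeasurableSpace Ω} [MeasurableSpace β] {P : Measure Ω}

lemma map_eval_eq_of_map_eq {X Y : ι → Ω → β} (hX : ∀ i, Measurable (X i))
    (hY : ∀ i, Measurable (Y i)) (h : P.map (fun ω i ↦ Y i ω) = P.map (fun ω i ↦ X i ω)) (i : ι) :
    P.map (Y i) = P.map (X i) := by
  have := congrArg (Measure.map fun u : ι → β ↦ u i) h
  rwa [Measure.map_map (measurable_pi_apply i) (measurable_pi_lambda _ hY),
    Measure.map_map (measurable_pi_apply i) (measurable_pi_lambda _ hX)] at this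

lemma iIndepFun.of_map_eq [IsProbabilityMeasure P] {X Y : ι → Ω → β}
    (hX : ∀ i, Measurable (X i)) (hY : ∀ i, Measurable (Y i)) (h : iIndepFun X P)
    (hXY : P.map (fun ω i ↦ Y i ω) = P.map (fun ω i ↦ X i ω)) : iIndepFun Y P := by
  rw [iIndepFun_iff_map_fun_eq_infinitePi_map hY, hXY, h.map_fun_eq_infinitePi_map hX]
  simp_rw [map_eval_eq_of_map_eq hX hY hXY]

lemma iIndepFun.sumElim [IsProbabilityMeasure P] {X : ι → Ω → β} {Y : κ → Ω → β}
    (hX : ∀ i, Measurable (X i)) (hY : ∀ k, Measurable (Y k)) (hXi : iIndepFun X P)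
    (hYi : iIndepFun Y P) (hXY : IndepFun (fun ω i ↦ X i ω) (fun ω k ↦ Y k ω) P) :
    iIndepFun (Sum.elim X Y) P := by
  have hZ : ∀ i, Measurable (Sum.elim X Y i) := Sum.forall.2 ⟨hX, hY⟩
  have hXm := measurable_pi_lambda _ hX
  have hYm := measurable_pi_lambda _ hY
  have hsplit : (fun ω i ↦ Sum.elim X Y i ω) = (MeasurableEquiv.sumPiEquivProdPi fun _ ↦ β).symm ∘
      fun ω ↦ ((fun i ↦ X i ω), (fun k ↦ Y k ω)) := by
    ext ω (i | k) <;> rfl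
  rw [iIndepFun_iff_map_fun_eq_infinitePi_map hZ, hsplit,
    ← Measure.map_map (MeasurableEquiv.measurable _) (hXm.prodMk hYm),
    (indepFun_iff_map_prod_eq_prod_map_map hXm.aemeasurable hYm.aemeasurable).1 hXY,
    hXi.map_fun_eq_infinitePi_map hX, hYi.map_fun_eq_infinitePi_map hY]
  have _ i := Measure.isProbabilityMeasure_map (hZ i).aemeasurable (μ := P)
  exact Measure.map_sumPiEquivProdPi_symm_prod_infinitePi fun i ↦ P.map (Sum.elim X Y i)

lemma measurable_biSup_comap {Z : ι → Ω → β} {S : Set ι} {k : κ → ι} (hk : ∀ l, k l ∈ S) :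
    Measurable[⨆ i ∈ S, MeasurableSpace.comap (Z i) ‹_›] fun ω l ↦ Z (k l) ω := by
  let m : MeasurableSpace Ω := ⨆ i ∈ S, MeasurableSpace.comap (Z i) ‹_›
  change Measurable[m] _
  exact measurable_pi_lambda _ fun l ↦
    measurable_iff_comap_le.2 (le_biSup (fun i ↦ MeasurableSpace.comap (Z i) _) (hk l))

lemma ae_forall_dist_le_of_map_eq [Countable ι] {𝒴 : Type*} [PseudoMetricSpace 𝒴]
    [MeasurableSpace 𝒴] [OpensMeasurableSpace 𝒴] {Z : ι → Ω → 𝒴} {W : Ω → 𝒴}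
    (hZ : ∀ i, Measurable (Z i)) (hW : Measurable W) (hZW : ∀ i, P.map (Z i) = P.map W)
    {y₀ : 𝒴} {R : ℝ} (h : ∀ᵐ ω ∂P, dist (W ω) y₀ ≤ R) : ∀ᵐ ω ∂P, ∀ i, dist (Z i ω) y₀ ≤ R :=
  ae_all_iff.2 fun i ↦ IdentDistrib.ae_mem_snd (t := {y | dist y y₀ ≤ R})
    ⟨hW.aemeasurable, (hZ i).aemeasurable, (hZW i).symm⟩
    (isClosed_le (by fun_prop) continuous_const).measurableSet h

end ProbabilityTheory

lemma tsum_mul_le_mul_tsum_nat_add {w d : ℕ → ℝ} {r : ℕ} {B : ℝ} (hw : ∀ l, 0 ≤ w l)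
    (hws : Summable w) (hd0 : ∀ l < r, d l = 0) (hd : ∀ l, 0 ≤ d l) (hdB : ∀ l, d l ≤ B) :
    ∑' l, w l * d l ≤ B * ∑' l, w (l + r) := by
  have hs : Summable fun l ↦ w l * d l :=
    (hws.mul_right B).of_nonneg_of_le (fun l ↦ mul_nonneg (hw l) (hd l))
      fun l ↦ mul_le_mul_of_nonneg_left (hdB l) (hw l)
  rw [← hs.sum_add_tsum_nat_add r,
    Finset.sum_eq_zero fun l hl ↦ by rw [hd0 l (Finset.mem_range.1 hl), mul_zero], zero_add,
    ← tsum_mul_left]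
  refine Summable.tsum_le_tsum (fun l ↦ ?_) ((summable_nat_add_iff r).2 hs)
    (((summable_nat_add_iff r).2 hws).mul_left B)
  rw [mul_comm B]
  exact mul_le_mul_of_nonneg_left (hdB _) (hw _)

section BernoulliShift

open Measure

variable {Ω 𝒳 𝒴 : Type*} {mΩ : MeasurableSpace Ω} {P : Measure Ω} {H : (ℕ → 𝒴) → 𝒳}
  {a : ℕ → ℝ}

lemma dist_le_mul_tsum_of_eq_of_lt [PseudoMetricSpace 𝒳] [PseudoMetricSpace 𝒴]
    (ha_nonneg : ∀ i, 0 ≤ a i) (ha_summable : Summable fun l ↦ a (l + 1))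
    (hHlip : ∀ x y : ℕ → 𝒴, dist (H x) (H y) ≤ ∑' l, a (l + 1) * dist (x l) (y l))
    {x y : ℕ → 𝒴} {r : ℕ} {B : ℝ} (hxy : ∀ l < r, x l = y l) (hB : ∀ l, dist (x l) (y l) ≤ B) :
    dist (H x) (H y) ≤ B * ∑' l, a (r + l) := by
  have hr : Summable fun l ↦ a (r + l) := by
    simpa only [add_comm r] using
      (summable_nat_add_iff r).2 ((summable_nat_add_iff 1).1 ha_summable)
  calc dist (H x) (H y) ≤ ∑' l, a (l + 1) * dist (x l) (y l) := hHlip x y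
    _ ≤ B * ∑' l, a (l + r + 1) :=
      tsum_mul_le_mul_tsum_nat_add (fun _ ↦ ha_nonneg _) ha_summable
        (fun l hl ↦ by rw [hxy l hl, dist_self]) (fun _ ↦ dist_nonneg) hB
    _ ≤ B * ∑' l, a (r + l) := by
      refine mul_le_mul_of_nonneg_left ?_ (dist_nonneg.trans (hB 0))
      rw [hr.tsum_eq_zero_add]
      simp_rw [add_right_comm _ r 1, add_comm _ r]
      exact le_add_of_nonneg_left (ha_nonneg _)

/-- The window `(X_{c+i})_{i<m}` of the Bernoulli shift `X_t = H((u_{t-l})_{l≥0})`. -/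
def shiftWindow (H : (ℕ → 𝒴) → 𝒳) (m : ℕ) (c : ℤ) (u : ℤ → 𝒴) : Fin m → 𝒳 :=
  fun i ↦ H fun l ↦ u (c + i - l)

lemma sum_dist_shiftWindow_le [PseudoMetricSpace 𝒳] [PseudoMetricSpace 𝒴]
    (ha_nonneg : ∀ i, 0 ≤ a i) (ha_summable : Summable fun l ↦ a (l + 1))
    (hHlip : ∀ x y : ℕ → 𝒴, dist (H x) (H y) ≤ ∑' l, a (l + 1) * dist (x l) (y l))
    {u v : ℤ → 𝒴} {j : ℤ} {B : ℝ} (huv : ∀ t, j < t → u t = v t)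
    (hB : ∀ t, dist (u t) (v t) ≤ B) (r : ℕ) :
    ∑ i : Fin r, dist (shiftWindow H r (r + j) u i) (shiftWindow H r (r + j) v i) ≤
      r * (B * ∑' l, a (r + l)) := by
  calc ∑ i : Fin r, dist (shiftWindow H r (r + j) u i) (shiftWindow H r (r + j) v i)
      ≤ ∑ _i : Fin r, B * ∑' l, a (r + l) :=
        Finset.sum_le_sum fun i _ ↦ dist_le_mul_tsum_of_eq_of_lt ha_nonneg ha_summable hHlip
          (fun l hl ↦ huv _ (by omega)) fun _ ↦ hB _
    _ = r * (B * ∑' l, a (r + l)) := by simp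

/-- With `ξ t = Z (inl t)` and `ξ' t = Z (inr t)`, the coupling reads its innovation at time `t`
from `Z (spliceIndex j t)`. -/
def spliceIndex (j t : ℤ) : ℤ ⊕ ℤ := if j < t then .inl t else .inr t

lemma spliceIndex_injective (j : ℤ) : (spliceIndex j).Injective := by
  intro s t h
  unfold spliceIndex at h
  split_ifs at h <;> simpa using h

lemma disjoint_range_spliceIndex_image_inl (j : ℤ) :
    Disjoint (Set.range (spliceIndex j)) (Sum.inl '' Set.Iic j) := by
  rw [Set.disjoint_left]
  rintro _ ⟨t, rfl⟩ ⟨s, hs, h⟩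
  unfold spliceIndex at h
  split_ifs at h with ht
  · cases h; exact absurd hs (not_le.2 ht)

lemma sumElim_spliceIndex {α : Type*} (f g : ℤ → α) (j t : ℤ) :
    Sum.elim f g (spliceIndex j t) = if j < t then f t else g t := by
  unfold spliceIndex
  split_ifs <;> rfl

variable [MeasurableSpace 𝒳] [MeasurableSpace 𝒴]

lemma measurable_shiftWindow (hH : Measurable H) (m : ℕ) (c : ℤ) :
    Measurable (shiftWindow H m c) :=
  measurable_pi_lambda _ fun _ ↦ hH.comp (measurable_pi_lambda _ fun _ ↦ measurable_pi_apply _)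

lemma map_shiftWindow_of_iIndepFun {ι : Type*} {Z : ι → Ω → 𝒴} (hZm : ∀ i, Measurable (Z i))
    (hZ : iIndepFun Z P) {ν : Measure 𝒴} [IsProbabilityMeasure ν] (hν : ∀ i, P.map (Z i) = ν)
    (hH : Measurable H) {g : ℤ → ι} (hg : g.Injective) (m : ℕ) (c : ℤ) :
    P.map (fun ω ↦ shiftWindow H m c fun t ↦ Z (g t) ω) =
      (infinitePi fun _ ↦ ν).map (shiftWindow H m 0) := by
  have hlaw : P.map (fun ω t ↦ Z (g t) ω) = infinitePi fun _ ↦ ν := by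
    simp_rw [(hZ.precomp hg).map_fun_eq_infinitePi_map fun t ↦ hZm (g t), hν]
  have hshift : shiftWindow H m c = shiftWindow H m 0 ∘ fun u t ↦ u (c + t) := by
    funext u i
    simp only [shiftWindow, Function.comp_apply, zero_add, add_sub_assoc]
  change P.map (shiftWindow H m c ∘ fun ω t ↦ Z (g t) ω) = _
  rw [← map_map (measurable_shiftWindow hH m c) (measurable_pi_lambda _ fun t ↦ hZm (g t)), hlaw,
    hshift, ← map_map (measurable_shiftWindow hH m 0)
      (measurable_pi_lambda _ fun t ↦ measurable_pi_apply _),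
    map_infinitePi_infinitePi_of_inj (add_right_injective c)]

lemma indep_shiftWindow_spliceIndex {Z : ℤ ⊕ ℤ → Ω → 𝒴} (hZm : ∀ i, Measurable (Z i))
    (hZ : iIndepFun Z P) (hH : Measurable H) (m : ℕ) (c j : ℤ) :
    Indep
      (MeasurableSpace.comap (fun ω ↦ shiftWindow H m c fun t ↦ Z (spliceIndex j t) ω)
        inferInstance)
      (⨆ t ∈ Set.Iic j, MeasurableSpace.comap (fun ω ↦ H fun l ↦ Z (.inl (t - l)) ω) ‹_›) P := by
  refine indep_of_indep_of_le_left (indep_of_indep_of_le_right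
    (indep_iSup_of_disjoint (fun i ↦ (hZm i).comap_le) ((iIndepFun_iff_iIndep _ _ _).1 hZ)
      (disjoint_range_spliceIndex_image_inl j)) ?_) ?_
  · refine iSup₂_le fun t ht ↦ ?_
    have hl : ∀ l : ℕ, (.inl (t - l) : ℤ ⊕ ℤ) ∈ Sum.inl '' Set.Iic j := fun l ↦
      ⟨t - l, by simp only [Set.mem_Iic] at ht ⊢; omega, rfl⟩
    exact (hH.comp (measurable_biSup_comap hl)).comap_le
  · exact ((measurable_shiftWindow hH m c).comp
      (measurable_biSup_comap fun t ↦ Set.mem_range_self t)).comap_le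

end BernoulliShift

theorem bernoulli_shift_coupling_general
    {Ω : Type*} [MeasurableSpace Ω] (P : Measure Ω) [IsProbabilityMeasure P]
    {𝒳 : Type*} [MetricSpace 𝒳] [MeasurableSpace 𝒳]
    {𝒴 : Type*} [MetricSpace 𝒴] [MeasurableSpace 𝒴] [BorelSpace 𝒴]
    -- (ξ_t) i.i.d., (ξ'_t) an independent copy of the process (ξ_t)
    (ξ ξ' : ℤ → Ω → 𝒴)
    (hξmeas : ∀ t, Measurable (ξ t)) (hξ'meas : ∀ t, Measurable (ξ' t))
    (hξindep : iIndepFun ξ P)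
    (hξident : ∀ t : ℤ, Measure.map (ξ t) P = Measure.map (ξ 0) P)
    (hcopy : Measure.map (fun ω => fun t : ℤ => ξ' t ω) P
        = Measure.map (fun ω => fun t : ℤ => ξ t ω) P)
    (hindcopy : IndepFun (fun ω => fun t : ℤ => ξ t ω) (fun ω => fun t : ℤ => ξ' t ω) P)
    -- boundedness: ρ(ξ_1, y₀) ≤ B/2 a.s.
    (y₀ : 𝒴) (B : ℝ) (hbdd : ∀ᵐ ω ∂P, dist (ξ 1 ω) y₀ ≤ B / 2)
    -- H Lipschitz with coefficients a_i ≥ 0, Σ_{i≥1} a_i < ∞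
    (H : (ℕ → 𝒴) → 𝒳) (hH : Measurable H)
    (a : ℕ → ℝ) (ha_nonneg : ∀ i, 0 ≤ a i) (ha_summable : Summable fun l => a (l + 1))
    (hHlip : ∀ x y : ℕ → 𝒴, dist (H x) (H y) ≤ ∑' l, a (l + 1) * dist (x l) (y l))
    -- X_t = H((ξ_{t−ℓ})_{ℓ≥0}) and the coupled version
    (X : ℤ → Ω → 𝒳) (hX : ∀ (t : ℤ) (ω : Ω), X t ω = H (fun l => ξ (t - l) ω))
    (Xstar : ℕ → ℕ → Ω → 𝒳)
    (hXstar : ∀ (j i : ℕ) (ω : Ω), Xstar j i ω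
      = H (fun l => if (j : ℤ) < (i : ℤ) - l then ξ ((i : ℤ) - l) ω else ξ' ((i : ℤ) - l) ω)) :
    -- X is strictly stationary
    (∀ (m : ℕ) (k : ℤ),
      Measure.map (fun ω => fun i : Fin m => X ((i : ℤ) + k) ω) P
        = Measure.map (fun ω => fun i : Fin m => X (i : ℤ) ω) P) ∧
    -- for every n ≥ 1, (X_1,…,X_n) satisfies condition (cl) with δ'_r = B Σ_{i≥r} a_i,
    -- witnessed by the explicit coupling X*
    (∀ n r j : ℕ, 1 ≤ n → 1 ≤ r → 1 ≤ j → 2 * r + j ≤ n + 1 →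
      Measure.map (fun ω => fun i : Fin r => Xstar j (r + j + i) ω) P
        = Measure.map (fun ω => fun i : Fin r => X ((r : ℤ) + (j : ℤ) + (i : ℤ)) ω) P ∧
      Indep
        (MeasurableSpace.comap (fun ω => fun i : Fin r => Xstar j (r + j + i) ω) inferInstance)
        (⨆ t ∈ Set.Icc 1 j, MeasurableSpace.comap (X (t : ℤ)) inferInstance) P ∧
      (∀ᵐ ω ∂P,
        ∑ i : Fin r, dist (X ((r : ℤ) + (j : ℤ) + (i : ℤ)) ω) (Xstar j (r + j + i) ω)
          ≤ (r : ℝ) * (B * ∑' l : ℕ, a (r + l)))) := by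
  have := Measure.isProbabilityMeasure_map (hξmeas 0).aemeasurable (μ := P)
  set Z : ℤ ⊕ ℤ → Ω → 𝒴 := Sum.elim ξ ξ'
  have hZm : ∀ i, Measurable (Z i) := Sum.forall.2 ⟨hξmeas, hξ'meas⟩
  have hZ : iIndepFun Z P :=
    hξindep.sumElim hξmeas hξ'meas (hξindep.of_map_eq hξmeas hξ'meas hcopy) hindcopy
  have hZlaw : ∀ i, P.map (Z i) = P.map (ξ 0) := Sum.forall.2
    ⟨hξident, fun t ↦ (map_eval_eq_of_map_eq hξmeas hξ'meas hcopy t).trans (hξident t)⟩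
  have hXw : ∀ (m : ℕ) (c : ℤ) ω (i : Fin m),
      X (c + i) ω = shiftWindow H m c (fun t ↦ Z (.inl t) ω) i := fun _ _ _ _ ↦ hX _ _
  have hXw₀ : ∀ (m : ℕ) ω (i : Fin m), X i ω = shiftWindow H m 0 (fun t ↦ Z (.inl t) ω) i := by
    simpa using fun m ↦ hXw m 0
  have hXstarw : ∀ (r j : ℕ) ω (i : Fin r),
      Xstar j (r + j + i) ω = shiftWindow H r (r + j) (fun t ↦ Z (spliceIndex j t) ω) i := by
    intro r j ω i
    simp only [hXstar, shiftWindow, Z, sumElim_spliceIndex, ite_apply]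
    push_cast
    rfl
  have hwin {g : ℤ → ℤ ⊕ ℤ} (hg : g.Injective) := map_shiftWindow_of_iIndepFun hZm hZ hZlaw hH hg
  refine ⟨fun m k ↦ ?_, fun n r j _ _ _ _ ↦ ⟨?_, ?_, ?_⟩⟩
  · simp_rw [add_comm _ k, hXw, hXw₀]
    rw [hwin Sum.inl_injective, hwin Sum.inl_injective]
  · simp_rw [hXstarw, hXw]
    rw [hwin (spliceIndex_injective j), hwin Sum.inl_injective]
  · simp_rw [hXstarw]
    refine indep_of_indep_of_le_right (indep_shiftWindow_spliceIndex hZm hZ hH r _ j)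
      (iSup₂_le fun t ht ↦ le_iSup₂_of_le (t : ℤ) (Set.mem_Iic.2 (by exact_mod_cast ht.2)) ?_)
    rw [show X t = _ from funext (hX t)]
    exact le_rfl
  · filter_upwards [ae_forall_dist_le_of_map_eq hZm (hξmeas 1)
      (fun i ↦ (hZlaw i).trans (hξident 1).symm) hbdd] with ω hω
    simp_rw [hXw, hXstarw]
    refine sum_dist_shiftWindow_le ha_nonneg ha_summable hHlip (fun t ht ↦ ?_) (fun t ↦ ?_) r
    · simp [Z, sumElim_spliceIndex, ht]
    · exact (dist_triangle_right _ _ y₀).trans (by linarith [hω (.inl t), hω (spliceIndex j t)])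

/-- **Section 5.4 (Bernoulli shifts).**
For an i.i.d. sequence `ξ` in a metric space `𝒴` with `ρ(ξ_1, y₀) ≤ B/2` a.s., and
`X_t = H((ξ_{t−ℓ})_{ℓ≥0})` with `H` Lipschitz with summable nonnegative coefficients
(`a (ℓ+1)` is the coefficient of the coordinate of lag `ℓ`), the process `X` is strictly
stationary and the explicit coupling `X*` (replace `ξ_s` by an independent copy `ξ'_s`
for `s ≤ j`) witnesses condition (cl) with `δ'_r = B Σ_{i≥r} a_i`. -/
theorem bernoulli_shift_coupling
    {Ω : Type*} [MeasurableSpace Ω] (P : Measure Ω) [IsProbabilityMeasure P]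
    {𝒳 : Type*} [MetricSpace 𝒳] [MeasurableSpace 𝒳] [BorelSpace 𝒳]
    {𝒴 : Type*} [MetricSpace 𝒴] [MeasurableSpace 𝒴] [BorelSpace 𝒴]
    -- (ξ_t) i.i.d., (ξ'_t) an independent copy of the process (ξ_t)
    (ξ ξ' : ℤ → Ω → 𝒴)
    (hξmeas : ∀ t, Measurable (ξ t)) (hξ'meas : ∀ t, Measurable (ξ' t))
    (hξindep : iIndepFun ξ P)
    (hξident : ∀ t : ℤ, Measure.map (ξ t) P = Measure.map (ξ 0) P)
    (hcopy : Measure.map (fun ω => fun t : ℤ => ξ' t ω) P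
        = Measure.map (fun ω => fun t : ℤ => ξ t ω) P)
    (hindcopy : IndepFun (fun ω => fun t : ℤ => ξ t ω) (fun ω => fun t : ℤ => ξ' t ω) P)
    -- boundedness: ρ(ξ_1, y₀) ≤ B/2 a.s.
    (y₀ : 𝒴) (B : ℝ) (hB : 0 < B) (hbdd : ∀ᵐ ω ∂P, dist (ξ 1 ω) y₀ ≤ B / 2)
    -- H Lipschitz with coefficients a_i ≥ 0, Σ_{i≥1} a_i < ∞
    (H : (ℕ → 𝒴) → 𝒳) (hH : Measurable H)
    (a : ℕ → ℝ) (ha_nonneg : ∀ i, 0 ≤ a i) (ha_summable : Summable fun l => a (l + 1))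
    (hHlip : ∀ x y : ℕ → 𝒴, dist (H x) (H y) ≤ ∑' l, a (l + 1) * dist (x l) (y l))
    -- X_t = H((ξ_{t−ℓ})_{ℓ≥0}) and the coupled version
    (X : ℤ → Ω → 𝒳) (hX : ∀ (t : ℤ) (ω : Ω), X t ω = H (fun l => ξ (t - l) ω))
    (Xstar : ℕ → ℕ → Ω → 𝒳)
    (hXstar : ∀ (j i : ℕ) (ω : Ω), Xstar j i ω
      = H (fun l => if (j : ℤ) < (i : ℤ) - l then ξ ((i : ℤ) - l) ω else ξ' ((i : ℤ) - l) ω)) :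
    -- X is strictly stationary
    (∀ (m : ℕ) (k : ℤ),
      Measure.map (fun ω => fun i : Fin m => X ((i : ℤ) + k) ω) P
        = Measure.map (fun ω => fun i : Fin m => X (i : ℤ) ω) P) ∧
    -- for every n ≥ 1, (X_1,…,X_n) satisfies condition (cl) with δ'_r = B Σ_{i≥r} a_i,
    -- witnessed by the explicit coupling X*
    (∀ n r j : ℕ, 1 ≤ n → 1 ≤ r → 1 ≤ j → 2 * r + j ≤ n + 1 →
      Measure.map (fun ω => fun i : Fin r => Xstar j (r + j + i) ω) P
        = Measure.map (fun ω => fun i : Fin r => X ((r : ℤ) + (j : ℤ) + (i : ℤ)) ω) P ∧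
      Indep
        (MeasurableSpace.comap (fun ω => fun i : Fin r => Xstar j (r + j + i) ω) inferInstance)
        (⨆ t ∈ Set.Icc 1 j, MeasurableSpace.comap (X (t : ℤ)) inferInstance) P ∧
      (∀ᵐ ω ∂P,
        ∑ i : Fin r, dist (X ((r : ℤ) + (j : ℤ) + (i : ℤ)) ω) (Xstar j (r + j + i) ω)
          ≤ (r : ℝ) * (B * ∑' l : ℕ, a (r + l)))) :=
  bernoulli_shift_coupling_general P ξ ξ' hξmeas hξ'meas hξindep hξident hcopy hindcopy y₀ B hbdd H
    hH a ha_nonneg ha_summable hHlip X hX Xstar hXstar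
end
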